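/- Let f : X × X × (0,∞) → ℝ be jointly measurable such that f(x,·;t) ∈ L²(μ) and f(·,y;t) ∈ L²(μ) for all x, y ∈ X and t > 0, and with t ↦ f(x,y;t) integrable on (0,b) for all b > 0. Suppose there are t₀ > 0, constants C₁, C₂ ≥ 0, a nonnegative integer k, and a nonnegative function h ∈ L²(μ) such that ‖f(x,·;t)‖_{L²(μ)} ≤ C₁ h(x) t^k and ‖f(·,y;t)‖_{L²(μ)} ≤ C₂ for all 0 < t < t₀ and all x, y ∈ X. Then for every integer ℓ ≥ 2 the ℓ-fold convolution f^{∗ℓ}(x,y;t) is well defined for 0 < t < t₀ and satisfies the pointwise bound |f^{∗ℓ}(x,y;t)| ≤ C₁^{ℓ−1} C₂ ‖h‖_{L²(μ)}^{ℓ−2} h(x) (k!)^{ℓ−1} t^{(ℓ−1)(k+1)} / ((ℓ−1)(k+1))! for all x, y ∈ X and 0 < t < t₀. -/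

import Mathlib

/-!
Each convolution step is estimated by Cauchy–Schwarz in `z` and then integrated in `τ`. The inner
integral of `f(x,·;t-τ) · f^{∗(n+1)}(·,y;τ)` is at most `C₁ h(x) (t-τ)^k` times the `L²` norm of
the second factor, which is `C₂` for `n = 0` and, by induction, at most `c_n τ^{(n+1)(k+1)} ‖h‖₂`
afterwards. The remaining `τ`-integral is the Beta integral
`∫₀ᵗ (t-τ)^k τ^m dτ = k! m! t^{k+m+1} / (k+m+1)!`, which produces the factorials.
-/

open MeasureTheory ProbabilityTheory Filter Set Topology
open scoped ENNReal

/-- The generalized time convolution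
`(F₁ ∗ F₂)(x,y;t) = ∫₀ᵗ ∫_X F₁(x,z;t−τ) F₂(z,y;τ) μ(dz) dτ`. -/
noncomputable def timeConv {X : Type*} [MeasurableSpace X] (μ : Measure X)
    (F₁ F₂ : X → X → ℝ → ℝ) (x y : X) (t : ℝ) : ℝ :=
  ∫ τ in (0:ℝ)..t, ∫ z, F₁ x z (t - τ) * F₂ z y τ ∂μ

/-- `iterConv μ f n = f^{∗(n+1)}`, the `(n+1)`-fold generalized time convolution of `f`. -/
noncomputable def iterConv {X : Type*} [MeasurableSpace X] (μ : Measure X)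
    (f : X → X → ℝ → ℝ) : ℕ → X → X → ℝ → ℝ
  | 0 => f
  | n + 1 => timeConv μ f (iterConv μ f n)

open scoped Nat

theorem integral_sub_pow_mul_pow (k m : ℕ) (t : ℝ) :
    ∫ τ in (0:ℝ)..t, (t - τ) ^ k * τ ^ m = (k ! * m ! / (k + m + 1)! : ℝ) * t ^ (k + m + 1) := by
  induction k generalizing m with
  | zero =>
    simp only [pow_zero, one_mul, integral_pow, zero_add, Nat.factorial_zero, Nat.factorial_succ]
    push_cast
    field_simp
    ring
  | succ k ih =>
    have hu : ∀ τ ∈ uIcc 0 t, HasDerivAt (fun τ : ℝ => (t - τ) ^ (k + 1))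
        (-((k + 1 : ℝ) * (t - τ) ^ k)) τ := fun τ _ => by
      refine ((hasDerivAt_pow (k + 1) (t - τ)).comp τ
        ((hasDerivAt_id' τ).const_sub t)).congr_deriv ?_
      push_cast
      ring
    have hv : ∀ τ ∈ uIcc 0 t, HasDerivAt (fun τ : ℝ => τ ^ (m + 1) / (m + 1)) (τ ^ m) τ :=
      fun τ _ => by
        refine ((hasDerivAt_pow (m + 1) τ).div_const ((m : ℝ) + 1)).congr_deriv ?_
        push_cast
        field_simp
    have hIBP := intervalIntegral.integral_mul_deriv_eq_deriv_mul hu hv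
      ((by fun_prop : Continuous _).intervalIntegrable _ _)
      ((by fun_prop : Continuous _).intervalIntegrable _ _)
    simp only [sub_self, zero_pow (Nat.succ_ne_zero _), zero_mul, sub_zero, zero_div,
      mul_zero] at hIBP
    have hscale : ∫ τ in (0:ℝ)..t, -((k + 1 : ℝ) * (t - τ) ^ k) * (τ ^ (m + 1) / (m + 1))
        = -((k + 1) / (m + 1) * ∫ τ in (0:ℝ)..t, (t - τ) ^ k * τ ^ (m + 1)) := by
      rw [← intervalIntegral.integral_const_mul, ← intervalIntegral.integral_neg]
      congr 1 with τ
      field_simp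
    rw [hIBP, hscale, ih, show k + (m + 1) + 1 = k + 1 + m + 1 by ring]
    push_cast [Nat.factorial_succ]
    field_simp
    ring

theorem intervalIntegral.norm_integral_le_of_norm_le_Ioo {E : Type*} [NormedAddCommGroup E]
    [NormedSpace ℝ E] {μ : Measure ℝ} [NullSingletonClass μ] {f : ℝ → E} {g : ℝ → ℝ} {a b : ℝ}
    (hab : a ≤ b) (h : ∀ τ ∈ Ioo a b, ‖f τ‖ ≤ g τ) (hg : IntervalIntegrable g μ a b) :
    ‖∫ τ in a..b, f τ ∂μ‖ ≤ ∫ τ in a..b, g τ ∂μ :=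
  intervalIntegral.norm_integral_le_of_norm_le hab
    (by filter_upwards [Ioo_ae_eq_Ioc (μ := μ) (a := a) (b := b)] with τ hτ hmem
        exact h τ (cast hτ.symm hmem)) hg

section

variable {X : Type*} [MeasurableSpace X] {μ : Measure X}

-- `g` need not be measurable: it will be an iterated convolution, dominated by a multiple of `h`.
theorem abs_integral_mul_le_of_eLpNorm_le {F g G : X → ℝ} {D E : ℝ}
    (hF : AEStronglyMeasurable F μ) (hG : AEStronglyMeasurable G μ) (hgG : ∀ z, ‖g z‖ ≤ ‖G z‖)
    (hD : 0 ≤ D) (hE : 0 ≤ E)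
    (hFD : eLpNorm F 2 μ ≤ .ofReal D) (hGE : eLpNorm G 2 μ ≤ .ofReal E) :
    |∫ z, F z * g z ∂μ| ≤ D * E := by
  have hHolder : eLpNorm (fun z => F z * g z) 1 μ ≤ .ofReal (D * E) := calc
    eLpNorm (fun z => F z * g z) 1 μ ≤ eLpNorm (fun z => F z * G z) 1 μ :=
      eLpNorm_mono fun z => by simp only [norm_mul]; gcongr; exact hgG z
    _ ≤ eLpNorm F 2 μ * eLpNorm G 2 μ := by
      simpa using eLpNorm_le_eLpNorm_mul_eLpNorm'_of_norm (r := 1) hF hG (· * ·) 1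
        (.of_forall fun z => by simp [norm_mul])
    _ ≤ .ofReal D * .ofReal E := by gcongr
    _ = .ofReal (D * E) := (ENNReal.ofReal_mul hD).symm
  have := (enorm_integral_le_lintegral_enorm (fun z => F z * g z)).trans
    (eLpNorm_one_eq_lintegral_enorm.symm.trans_le hHolder)
  rwa [Real.enorm_eq_ofReal_abs, ENNReal.ofReal_le_ofReal_iff (by positivity)] at this

theorem abs_timeConv_le_of_abs_integral_le {F G : X → X → ℝ → ℝ} {x y : X} {t A : ℝ} (k m : ℕ)
    (ht : 0 ≤ t)
    (hFG : ∀ τ ∈ Ioo 0 t, |∫ z, F x z (t - τ) * G z y τ ∂μ| ≤ A * ((t - τ) ^ k * τ ^ m)) :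
    |timeConv μ F G x y t| ≤ A * (k ! * m ! / (k + m + 1)! : ℝ) * t ^ (k + m + 1) := by
  calc |timeConv μ F G x y t| ≤ ∫ τ in (0:ℝ)..t, A * ((t - τ) ^ k * τ ^ m) := by
        rw [← Real.norm_eq_abs]
        exact intervalIntegral.norm_integral_le_of_norm_le_Ioo ht hFG
          ((by fun_prop : Continuous fun τ : ℝ => A * ((t - τ) ^ k * τ ^ m)).intervalIntegrable _ _)
    _ = A * (k ! * m ! / (k + m + 1)! : ℝ) * t ^ (k + m + 1) := by
        rw [intervalIntegral.integral_const_mul, integral_sub_pow_mul_pow, mul_assoc]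

variable {f : X → X → ℝ → ℝ} {t₀ C₁ C₂ : ℝ} {k : ℕ} {h : X → ℝ}

theorem abs_timeConv_self_le
    (hf₁ : ∀ x s, AEStronglyMeasurable (fun z => f x z s) μ)
    (hf₂ : ∀ y s, AEStronglyMeasurable (fun z => f z y s) μ)
    (hC₁ : 0 ≤ C₁) (hC₂ : 0 ≤ C₂) (hh : ∀ x, 0 ≤ h x)
    (hb₁ : ∀ x t, 0 < t → t < t₀ →
      eLpNorm (fun z => f x z t) 2 μ ≤ ENNReal.ofReal (C₁ * h x * t ^ k))
    (hb₂ : ∀ y t, 0 < t → t < t₀ → eLpNorm (fun z => f z y t) 2 μ ≤ ENNReal.ofReal C₂)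
    {x y : X} {t : ℝ} (ht : 0 < t) (htt₀ : t < t₀) :
    |timeConv μ f f x y t| ≤ C₁ * h x * C₂ * (k ! / (k + 1)! : ℝ) * t ^ (k + 1) := by
  refine (abs_timeConv_le_of_abs_integral_le (A := C₁ * h x * C₂) k 0 ht.le
    fun τ hτ => ?_).trans_eq (by simp)
  have hτt : 0 < t - τ := sub_pos.mpr hτ.2
  calc |∫ z, f x z (t - τ) * f z y τ ∂μ| ≤ C₁ * h x * (t - τ) ^ k * C₂ :=
        abs_integral_mul_le_of_eLpNorm_le (hf₁ x _) (hf₂ y τ) (fun _ => le_rfl)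
          (by have := hh x; positivity) hC₂ (hb₁ x _ hτt (by linarith [hτ.1]))
          (hb₂ y τ hτ.1 (hτ.2.trans htt₀))
    _ = C₁ * h x * C₂ * ((t - τ) ^ k * τ ^ 0) := by ring

theorem abs_timeConv_le_of_abs_le {G : X → X → ℝ → ℝ} {c : ℝ} {m : ℕ}
    (hf₁ : ∀ x s, AEStronglyMeasurable (fun z => f x z s) μ)
    (hC₁ : 0 ≤ C₁) (hh : ∀ x, 0 ≤ h x) (hhL2 : MemLp h 2 μ) (hc : 0 ≤ c)
    (hb₁ : ∀ x t, 0 < t → t < t₀ →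
      eLpNorm (fun z => f x z t) 2 μ ≤ ENNReal.ofReal (C₁ * h x * t ^ k))
    {y : X} (hG : ∀ z τ, 0 < τ → τ < t₀ → |G z y τ| ≤ c * h z * τ ^ m)
    {x : X} {t : ℝ} (ht : 0 < t) (htt₀ : t < t₀) :
    |timeConv μ f G x y t| ≤ C₁ * h x * (c * (eLpNorm h 2 μ).toReal) *
      (k ! * m ! / (k + m + 1)! : ℝ) * t ^ (k + m + 1) := by
  set H := (eLpNorm h 2 μ).toReal
  refine abs_timeConv_le_of_abs_integral_le k m ht.le fun τ hτ => ?_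
  have hτt : 0 < t - τ := sub_pos.mpr hτ.2
  have hcτ : 0 ≤ c * τ ^ m := mul_nonneg hc (pow_nonneg hτ.1.le m)
  have hcH : eLpNorm (fun z => c * τ ^ m * h z) 2 μ = ENNReal.ofReal (c * τ ^ m * H) := by
    rw [ENNReal.ofReal_mul hcτ, ← Real.enorm_of_nonneg hcτ,
      ENNReal.ofReal_toReal hhL2.eLpNorm_ne_top]
    exact eLpNorm_const_smul (c * τ ^ m) h 2 μ
  have hGc : ∀ z, ‖G z y τ‖ ≤ ‖c * τ ^ m * h z‖ := fun z =>
    calc ‖G z y τ‖ ≤ c * τ ^ m * h z := by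
          rw [Real.norm_eq_abs, mul_right_comm]
          exact hG z τ hτ.1 (hτ.2.trans htt₀)
      _ ≤ ‖c * τ ^ m * h z‖ := le_abs_self _
  calc |∫ z, f x z (t - τ) * G z y τ ∂μ| ≤ C₁ * h x * (t - τ) ^ k * (c * τ ^ m * H) :=
        abs_integral_mul_le_of_eLpNorm_le (hf₁ x _) (hhL2.1.const_mul _) hGc
          (by have := hh x; positivity) (mul_nonneg hcτ ENNReal.toReal_nonneg)
          (hb₁ x _ hτt (by linarith [hτ.1])) hcH.le
    _ = C₁ * h x * (c * H) * ((t - τ) ^ k * τ ^ m) := by ring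

theorem abs_iterConv_le (hfm : Measurable fun z : X × X × ℝ => f z.1 z.2.1 z.2.2)
    (hC₁ : 0 ≤ C₁) (hC₂ : 0 ≤ C₂) (hh : ∀ x, 0 ≤ h x) (hhL2 : MemLp h 2 μ)
    (hb₁ : ∀ x t, 0 < t → t < t₀ →
      eLpNorm (fun z => f x z t) 2 μ ≤ ENNReal.ofReal (C₁ * h x * t ^ k))
    (hb₂ : ∀ y t, 0 < t → t < t₀ → eLpNorm (fun z => f z y t) 2 μ ≤ ENNReal.ofReal C₂)
    (n : ℕ) {x y : X} {t : ℝ} (ht : 0 < t) (htt₀ : t < t₀) :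
    |iterConv μ f (n + 1) x y t| ≤
      C₁ ^ (n + 1) * C₂ * (eLpNorm h 2 μ).toReal ^ n * (k ! : ℝ) ^ (n + 1) /
        ((n + 1) * (k + 1))! * h x * t ^ ((n + 1) * (k + 1)) := by
  have hf₁ : ∀ x s, AEStronglyMeasurable (fun z => f x z s) μ := fun x s =>
    (hfm.comp (measurable_const.prodMk
      (measurable_id.prodMk measurable_const))).aestronglyMeasurable
  have hf₂ : ∀ y s, AEStronglyMeasurable (fun z => f z y s) μ := fun y s =>
    (hfm.comp (measurable_id.prodMk (measurable_const (a := (y, s))))).aestronglyMeasurable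
  induction n generalizing x t with
  | zero =>
    refine (abs_timeConv_self_le hf₁ hf₂ hC₁ hC₂ hh hb₁ hb₂ ht htt₀).trans_eq ?_
    simp only [zero_add, one_mul, pow_one, pow_zero]
    ring
  | succ n ih =>
    refine (abs_timeConv_le_of_abs_le hf₁ hC₁ hh hhL2 (by positivity) hb₁
      (fun z τ hτ hτt₀ => ih hτ hτt₀) ht htt₀).trans_eq ?_
    rw [show k + (n + 1) * (k + 1) + 1 = (n + 1 + 1) * (k + 1) by ring]
    field_simp
    ring

end

theorem iterated_convolution_pointwise_bound_two_two_general
    {X : Type*} [MeasurableSpace X] (μ : Measure X)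
    (f : X → X → ℝ → ℝ)
    (hfm : Measurable fun z : X × X × ℝ => f z.1 z.2.1 z.2.2)
    (t₀ C₁ C₂ : ℝ) (hC₁ : 0 ≤ C₁) (hC₂ : 0 ≤ C₂) (k : ℕ)
    (h : X → ℝ) (hh : ∀ x, 0 ≤ h x) (hhL2 : MemLp h 2 μ)
    (hb₁ : ∀ x t, 0 < t → t < t₀ →
      eLpNorm (fun z => f x z t) 2 μ ≤ ENNReal.ofReal (C₁ * h x * t ^ k))
    (hb₂ : ∀ y t, 0 < t → t < t₀ →
      eLpNorm (fun z => f z y t) 2 μ ≤ ENNReal.ofReal C₂) :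
    ∀ l : ℕ, 2 ≤ l → ∀ x y t, 0 < t → t < t₀ →
      |iterConv μ f (l - 1) x y t| ≤
        C₁ ^ (l - 1) * C₂ * ((eLpNorm h 2 μ).toReal) ^ (l - 2) * h x *
          ((k.factorial : ℝ)) ^ (l - 1) * t ^ ((l - 1) * (k + 1)) /
          (((l - 1) * (k + 1)).factorial : ℝ) := by
  intro l hl x y t ht htt₀
  obtain ⟨n, rfl⟩ : ∃ n, l = n + 2 := ⟨l - 2, by omega⟩
  rw [show n + 2 - 1 = n + 1 by omega, show n + 2 - 2 = n by omega]
  exact (abs_iterConv_le hfm hC₁ hC₂ hh hhL2 hb₁ hb₂ n ht htt₀).trans_eq (by ring)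

/-- Pointwise bound on the ℓ-fold convolution, `(2,2)` case. -/
theorem iterated_convolution_pointwise_bound_two_two
    {X : Type*} [MeasurableSpace X] (μ : Measure X)
    (f : X → X → ℝ → ℝ)
    (hfm : Measurable fun z : X × X × ℝ => f z.1 z.2.1 z.2.2)
    (hfL2fst : ∀ x t, 0 < t → MemLp (fun z => f x z t) 2 μ)
    (hfL2snd : ∀ y t, 0 < t → MemLp (fun z => f z y t) 2 μ)
    (hft : ∀ x y b, 0 < b → IntegrableOn (fun t => f x y t) (Ioo 0 b))
    (t₀ C₁ C₂ : ℝ) (ht₀ : 0 < t₀) (hC₁ : 0 ≤ C₁) (hC₂ : 0 ≤ C₂) (k : ℕ)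
    (h : X → ℝ) (hh : ∀ x, 0 ≤ h x) (hhL2 : MemLp h 2 μ)
    (hb₁ : ∀ x t, 0 < t → t < t₀ →
      eLpNorm (fun z => f x z t) 2 μ ≤ ENNReal.ofReal (C₁ * h x * t ^ k))
    (hb₂ : ∀ y t, 0 < t → t < t₀ →
      eLpNorm (fun z => f z y t) 2 μ ≤ ENNReal.ofReal C₂) :
    ∀ l : ℕ, 2 ≤ l → ∀ x y t, 0 < t → t < t₀ →
      |iterConv μ f (l - 1) x y t| ≤
        C₁ ^ (l - 1) * C₂ * ((eLpNorm h 2 μ).toReal) ^ (l - 2) * h x *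
          ((k.factorial : ℝ)) ^ (l - 1) * t ^ ((l - 1) * (k + 1)) /
          (((l - 1) * (k + 1)).factorial : ℝ) :=
  iterated_convolution_pointwise_bound_two_two_general μ f hfm t₀ C₁ C₂ hC₁ hC₂ k h hh hhL2 hb₁ hb₂
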